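/- Let k be a kernel on 𝒳×𝒳, f ∈ H_k(𝒳), σ > 0, X = {x_i}_{i=1}^n ⊆ 𝒳, ε ∈ ℝ^n, y_i = f(x_i) + ε_i, and let R = R_{f,σ²,ε} be the kernel ridge regression solution. Then the residual vector satisfies ‖(f − R)_X‖₂ ≤ ‖ε‖₂ + (‖ε‖₂² + σ²‖f‖²_{H_k(𝒳)})^{1/2}, where (f − R)_X denotes the vector of values (f(x_i) − R(x_i))_{i=1}^n. -/
import Mathlib

lemma sqrt_sum_sq_add_le {n : ℕ} (a b : Fin n → ℝ) :
    Real.sqrt (∑ i, (a i + b i) ^ 2) ≤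
      Real.sqrt (∑ i, (a i) ^ 2) + Real.sqrt (∑ i, (b i) ^ 2) := by
  have h := norm_add_le ((WithLp.equiv 2 (Fin n → ℝ)).symm a)
    ((WithLp.equiv 2 (Fin n → ℝ)).symm b)
  simpa [EuclideanSpace.norm_eq, Real.norm_eq_abs, sq_abs] using h

open RealInnerProductSpace in
/-- with the setup of kernel ridge regression in an RKHS `H` (a real
Hilbert space with feature map `φ`, evaluation `g(x) = ⟪g, φ x⟫`), the residual vector
of the ridge solution `R = R_{f,σ²,ε}` satisfies
`‖(f − R)_X‖₂ ≤ ‖ε‖₂ + (‖ε‖₂² + σ²‖f‖²)^{1/2}`. -/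
theorem ridge_regression_residual_bound {𝒳 H : Type*}
    [NormedAddCommGroup H] [InnerProductSpace ℝ H]
    (φ : 𝒳 → H) (f : H) {n : ℕ} (σ : ℝ) (hσ : 0 < σ)
    (x : Fin n → 𝒳) (ε : Fin n → ℝ) (y : Fin n → ℝ)
    (hy : ∀ i, y i = ⟪f, φ (x i)⟫ + ε i) (R : H)
    (hR : ∀ g : H,
      (1 / (n : ℝ)) * ∑ i, (⟪R, φ (x i)⟫ - y i) ^ 2 + (σ ^ 2 / n) * ‖R‖ ^ 2 ≤
      (1 / (n : ℝ)) * ∑ i, (⟪g, φ (x i)⟫ - y i) ^ 2 + (σ ^ 2 / n) * ‖g‖ ^ 2) :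
    Real.sqrt (∑ i, (⟪f, φ (x i)⟫ - ⟪R, φ (x i)⟫) ^ 2) ≤
      Real.sqrt (∑ i, (ε i) ^ 2) +
        Real.sqrt ((∑ i, (ε i) ^ 2) + σ ^ 2 * ‖f‖ ^ 2) := by
  rcases Nat.eq_zero_or_pos n with hn | hn
  · subst hn
    simp only [Finset.univ_eq_empty, Finset.sum_empty, Real.sqrt_zero, zero_add]
    positivity
  · have hn' : (0 : ℝ) < n := by exact_mod_cast hn
    have h1 : ∑ i, (⟪R, φ (x i)⟫ - y i) ^ 2 ≤ (∑ i, (ε i) ^ 2) + σ ^ 2 * ‖f‖ ^ 2 := by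
      have h := hR f
      have hf : ∑ i, (⟪f, φ (x i)⟫ - y i) ^ 2 = ∑ i, (ε i) ^ 2 :=
        Finset.sum_congr rfl fun i _ => by rw [hy i]; ring
      rw [hf] at h
      have hRn : 0 ≤ (σ ^ 2 / n) * ‖R‖ ^ 2 := by positivity
      have h2 : (1 / (n : ℝ)) * ∑ i, (⟪R, φ (x i)⟫ - y i) ^ 2 ≤
          (1 / (n : ℝ)) * ((∑ i, (ε i) ^ 2) + σ ^ 2 * ‖f‖ ^ 2) := by
        have : (1 / (n : ℝ)) * ((∑ i, (ε i) ^ 2) + σ ^ 2 * ‖f‖ ^ 2) =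
            (1 / (n : ℝ)) * ∑ i, (ε i) ^ 2 + (σ ^ 2 / n) * ‖f‖ ^ 2 := by ring
        rw [this]
        linarith
      have := mul_le_mul_of_nonneg_left h2 hn'.le
      rw [← mul_assoc, ← mul_assoc, mul_one_div, div_self hn'.ne', one_mul, one_mul] at this
      exact this
    have key : ∀ i, ⟪f, φ (x i)⟫ - ⟪R, φ (x i)⟫ = (-ε i) + (y i - ⟪R, φ (x i)⟫) :=
      fun i => by rw [hy i]; ring
    calc Real.sqrt (∑ i, (⟪f, φ (x i)⟫ - ⟪R, φ (x i)⟫) ^ 2)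
        = Real.sqrt (∑ i, ((-ε i) + (y i - ⟪R, φ (x i)⟫)) ^ 2) := by
          rw [Finset.sum_congr rfl fun i _ => by rw [key i]]
      _ ≤ Real.sqrt (∑ i, (-ε i) ^ 2) + Real.sqrt (∑ i, (y i - ⟪R, φ (x i)⟫) ^ 2) :=
          sqrt_sum_sq_add_le _ _
      _ = Real.sqrt (∑ i, (ε i) ^ 2) + Real.sqrt (∑ i, (⟪R, φ (x i)⟫ - y i) ^ 2) := by
          congr 1
          · congr 1; exact Finset.sum_congr rfl fun i _ => by ring
          · congr 1; exact Finset.sum_congr rfl fun i _ => by ring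
      _ ≤ Real.sqrt (∑ i, (ε i) ^ 2) +
            Real.sqrt ((∑ i, (ε i) ^ 2) + σ ^ 2 * ‖f‖ ^ 2) := by
          gcongr
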